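/- arXiv:1906.06684 — 2 statements merged into one kernel-verified Lean document; each statement's English description precedes it below -/
import Mathlib

section
/- For every Borel probability measure μ̃ on Cantor space 𝒞 = ℕ → Bool, there exist a countable set E ⊆ 𝒞 and a function F : 𝒞 → ℕ → Bool that is continuous on 𝒞 \ E such that for every Borel set B ⊆ 𝒞 one has μ̃(B) = γ((𝒞 \ E) ∩ F⁻¹(B)), where γ is the fair coin measure. In particular, the pushforward under F of γ restricted to 𝒞 \ E equals μ̃. -/
open MeasureTheory Set

/-- `IsFairCoin γ` says that `γ` is the fair-coin measure on Cantor space `ℕ → Bool`: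
the (unique) Borel probability measure assigning measure `2⁻ⁿ` to each cylinder set
determined by fixing the first `n` coordinates. -/
def IsFairCoin (γ : Measure (ℕ → Bool)) : Prop :=
  IsProbabilityMeasure γ ∧
    ∀ (n : ℕ) (w : Fin n → Bool),
      γ {x : ℕ → Bool | ∀ i : Fin n, x (i : ℕ) = w i} = (1 / 2 : ENNReal) ^ n

namespace FairCoinAux

noncomputable section

open scoped ENNReal

lemma half_pow_ne_top (n : ℕ) : ((2 : ℝ≥0∞)⁻¹ ^ n) ≠ ∞ := by
  simp [ENNReal.pow_ne_top, ENNReal.inv_ne_top]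

lemma half_pow_pos (n : ℕ) : 0 < ((2 : ℝ≥0∞)⁻¹ ^ n) :=
  ENNReal.pow_pos (by simp) n

lemma half_add_half (n : ℕ) :
    (2 : ℝ≥0∞)⁻¹ ^ (n + 1) + (2 : ℝ≥0∞)⁻¹ ^ (n + 1) = (2 : ℝ≥0∞)⁻¹ ^ n := by
  rw [pow_succ, ← mul_add, ENNReal.inv_two_add_inv_two, mul_one]

lemma tsum_half_geometric : ∑' n : ℕ, (2 : ℝ≥0∞)⁻¹ ^ n = 2 := by
  rw [ENNReal.tsum_geometric]
  norm_num [ENNReal.one_sub_inv_two]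

/-- Cantor space: `ℕ → Bool`. -/
abbrev Cs := ℕ → Bool

/-- cylinder set given by a finite word -/
def cyl (w : List Bool) : Set Cs := {x | ∀ i, i < w.length → x i = w.getD i false}

def pre (y : Cs) (n : ℕ) : List Bool := List.ofFn (fun i : Fin n => y i)

@[simp] lemma pre_length (y : Cs) (n : ℕ) : (pre y n).length = n := by simp [pre]

lemma pre_getD (y : Cs) {i n : ℕ} (h : i < n) (d : Bool) : (pre y n).getD i d = y i := by
  rw [List.getD_eq_getElem?_getD]
  simp [pre, List.getElem?_ofFn, h]

def gval (x : Cs) : ℝ≥0∞ := ∑' n, if x n then (2 : ℝ≥0∞)⁻¹ ^ (n + 1) else 0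

def prefVal (x : Cs) (n : ℕ) : ℝ≥0∞ :=
  ∑ i ∈ Finset.range n, if x i then (2 : ℝ≥0∞)⁻¹ ^ (i + 1) else 0

def tailVal (x : Cs) (n : ℕ) : ℝ≥0∞ := ∑' k, if x (k + n) then (2 : ℝ≥0∞)⁻¹ ^ (k + n + 1) else 0

lemma gval_split (x : Cs) (n : ℕ) : gval x = prefVal x n + tailVal x n := by
  have h := Summable.sum_add_tsum_nat_add' (f := fun i => if x i then (2 : ℝ≥0∞)⁻¹ ^ (i + 1) else 0)
    (k := n) ENNReal.summable
  exact h.symm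

lemma tsum_tail_full (n : ℕ) : ∑' k : ℕ, (2 : ℝ≥0∞)⁻¹ ^ (k + n + 1) = (2 : ℝ≥0∞)⁻¹ ^ n := by
  have : ∀ k : ℕ, (2 : ℝ≥0∞)⁻¹ ^ (k + n + 1) = (2 : ℝ≥0∞)⁻¹ ^ (n + 1) * (2 : ℝ≥0∞)⁻¹ ^ k := by
    intro k; rw [← pow_add]; ring_nf
  simp_rw [this]
  rw [ENNReal.tsum_mul_left, tsum_half_geometric, pow_succ]
  rw [mul_assoc, ENNReal.inv_mul_cancel (by norm_num) (by norm_num), mul_one]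

lemma tailVal_le (x : Cs) (n : ℕ) : tailVal x n ≤ (2 : ℝ≥0∞)⁻¹ ^ n := by
  rw [← tsum_tail_full n]
  exact ENNReal.tsum_le_tsum fun k => by split <;> simp

lemma gval_le_one (x : Cs) : gval x ≤ 1 := by
  have := tailVal_le x 0
  have h := gval_split x 0
  simp only [prefVal, Finset.range_zero, Finset.sum_empty, zero_add] at h
  rw [h]
  simpa using this

lemma le_tailVal (x : Cs) {n k : ℕ} (h : x (k + n) = true) :
    (2 : ℝ≥0∞)⁻¹ ^ (k + n + 1) ≤ tailVal x n := by
  have := ENNReal.le_tsum (f := fun k => if x (k + n) then (2 : ℝ≥0∞)⁻¹ ^ (k + n + 1) else 0) k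
  simpa [h, tailVal] using this

lemma tailVal_lt_of_false (x : Cs) {n k : ℕ} (h : x (k + n) = false) :
    tailVal x n < (2 : ℝ≥0∞)⁻¹ ^ n := by
  have hle : tailVal x n ≤ ∑' j, if j = k then 0 else (2 : ℝ≥0∞)⁻¹ ^ (j + n + 1) := by
    refine ENNReal.tsum_le_tsum fun j => ?_
    by_cases hj : j = k
    · subst hj; simp [h]
    · simp [hj]; split <;> simp
  have hfull : (2 : ℝ≥0∞)⁻¹ ^ (k + n + 1) + ∑' j, (if j = k then 0 else (2 : ℝ≥0∞)⁻¹ ^ (j + n + 1))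
      = (2 : ℝ≥0∞)⁻¹ ^ n := by
    rw [← tsum_tail_full n, ENNReal.tsum_eq_add_tsum_ite (f := fun j => (2 : ℝ≥0∞)⁻¹ ^ (j + n + 1)) k]
    congr 1
    exact tsum_congr fun j => by by_cases hj : j = k <;> simp [hj]
  calc tailVal x n ≤ ∑' j, (if j = k then 0 else (2 : ℝ≥0∞)⁻¹ ^ (j + n + 1)) := hle
    _ < (2 : ℝ≥0∞)⁻¹ ^ n := by
        rw [← hfull, add_comm]
        exact ENNReal.lt_add_right (by
          refine ne_top_of_le_ne_top (half_pow_ne_top n) ?_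
          rw [← hfull]; exact le_add_self) (half_pow_pos (k + n + 1)).ne'

lemma tailVal_eq_zero_iff (x : Cs) (n : ℕ) : tailVal x n = 0 ↔ ∀ k, x (k + n) = false := by
  constructor
  · intro h k
    by_contra hk
    have hk' : x (k + n) = true := by simpa using hk
    have := le_tailVal x hk'
    rw [h] at this
    exact absurd (le_antisymm this zero_le) (half_pow_pos _).ne'
  · intro h; simp [tailVal, h]

lemma tailVal_eq_max_iff (x : Cs) (n : ℕ) :
    tailVal x n = (2 : ℝ≥0∞)⁻¹ ^ n ↔ ∀ k, x (k + n) = true := by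
  constructor
  · intro h k
    by_contra hk
    have hk' : x (k + n) = false := by simpa using hk
    exact absurd h (tailVal_lt_of_false x hk').ne
  · intro h
    simp only [tailVal, h, if_true]
    exact tsum_tail_full n

/-! ### cylinder lemmas -/

lemma cyl_nil : cyl [] = univ := by
  ext x; simp [cyl]

lemma mem_cyl_concat {x : Cs} {w : List Bool} {b : Bool} :
    x ∈ cyl (w ++ [b]) ↔ x ∈ cyl w ∧ x w.length = b := by
  constructor
  · intro h
    refine ⟨fun i hi => ?_, ?_⟩
    · rw [h i (by simp; omega), List.getD_append _ _ _ _ hi]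
    · have := h w.length (by simp)
      rwa [List.getD_eq_getElem?_getD, List.getElem?_concat_length, Option.getD_some] at this
  · rintro ⟨h1, h2⟩ i hi
    simp only [List.length_append, List.length_singleton] at hi
    rcases lt_or_eq_of_le (Nat.lt_succ_iff.mp hi) with hlt | heq
    · rw [List.getD_append _ _ _ _ hlt]; exact h1 i hlt
    · subst heq
      rw [List.getD_eq_getElem?_getD, List.getElem?_concat_length, Option.getD_some]
      exact h2

lemma cyl_concat_subset (w : List Bool) (b : Bool) : cyl (w ++ [b]) ⊆ cyl w :=
  fun _ h => (mem_cyl_concat.mp h).1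

lemma cyl_split (w : List Bool) : cyl w = cyl (w ++ [false]) ∪ cyl (w ++ [true]) := by
  ext x
  simp only [mem_union, mem_cyl_concat]
  constructor
  · intro h
    cases hb : x w.length
    · exact Or.inl ⟨h, rfl⟩
    · exact Or.inr ⟨h, rfl⟩
  · rintro (⟨h, _⟩ | ⟨h, _⟩) <;> exact h

lemma cyl_concat_disjoint (w : List Bool) : Disjoint (cyl (w ++ [false])) (cyl (w ++ [true])) := by
  rw [Set.disjoint_left]
  intro x h1 h2
  have e1 := (mem_cyl_concat.mp h1).2
  have e2 := (mem_cyl_concat.mp h2).2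
  rw [e1] at e2; exact Bool.noConfusion e2

lemma measurableSet_cyl (w : List Bool) : MeasurableSet (cyl w) := by
  have : cyl w = ⋂ i ∈ Finset.range w.length, (fun x : Cs => x i) ⁻¹' {w.getD i false} := by
    ext x; simp [cyl]
  rw [this]
  exact MeasurableSet.biInter (Finset.range w.length).countable_toSet
    fun i _ => (measurable_pi_apply i) (measurableSet_singleton _)

lemma mem_cyl_pre {x y : Cs} {n : ℕ} : x ∈ cyl (pre y n) ↔ ∀ i < n, x i = y i := by
  constructor
  · intro h i hi
    have := h i (by simpa using hi)
    rwa [pre_getD _ hi] at this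
  · intro h i hi
    rw [pre_getD _ (by simpa using hi)]
    exact h i (by simpa using hi)

lemma pre_concat (y : Cs) (n : ℕ) : pre y (n + 1) = pre y n ++ [y n] := by
  rw [pre, List.ofFn_succ']
  simp [pre, List.concat_eq_append]

/-! ### measure lemmas -/

variable {γ : Measure Cs}

lemma measure_cyl (hγ : IsFairCoin γ) (w : List Bool) :
    γ (cyl w) = (2 : ℝ≥0∞)⁻¹ ^ w.length := by
  have h := hγ.2 w.length (fun i => w.getD (i : ℕ) false)
  have hset : {x : ℕ → Bool | ∀ i : Fin w.length, x (i : ℕ) = w.getD (i : ℕ) false} = cyl w := by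
    ext x
    constructor
    · intro hx i hi; exact hx ⟨i, hi⟩
    · intro hx i; exact hx i i.isLt
  rw [hset] at h
  rw [h, one_div]

lemma gval_measurable : Measurable gval := by
  apply Measurable.ennreal_tsum (f := fun n (x : Cs) => if x n then (2 : ℝ≥0∞)⁻¹ ^ (n + 1) else 0)
  intro n
  exact (measurable_of_countable (fun b : Bool => if b then (2 : ℝ≥0∞)⁻¹ ^ (n + 1) else 0)).comp
    (measurable_pi_apply (X := fun _ : ℕ => Bool) n)

lemma noAtoms (hγ : IsFairCoin γ) : NoAtoms γ := by
  constructor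
  intro x
  by_contra h
  obtain ⟨n, hn⟩ := ENNReal.exists_inv_two_pow_lt h
  have hsub : {x} ⊆ cyl (pre x n) := by
    rintro y rfl
    exact mem_cyl_pre.mpr fun i _ => rfl
  have := (measure_mono hsub).trans_lt (by rw [measure_cyl hγ, pre_length]; exact hn)
  exact lt_irrefl _ this

lemma countable_null (hγ : IsFairCoin γ) {s : Set Cs} (hs : s.Countable) : γ s = 0 := by
  haveI : NullSingletonClass γ := noAtoms hγ
  exact hs.measure_zero γ

/-- eventually-constant sequences -/
def EvC : Set Cs := {x | ∃ N, ∀ n, N ≤ n → x n = x N}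

lemma EvC_countable : EvC.Countable := by
  have hsub : EvC ⊆ Set.range (fun p : List Bool × Bool => (fun n => p.1.getD n p.2 : Cs)) := by
    rintro x ⟨N, hN⟩
    refine ⟨(pre x N, x N), ?_⟩
    funext n
    show (pre x N).getD n (x N) = x n
    by_cases hn : n < N
    · exact (pre_getD x hn _)
    · push_neg at hn
      rw [List.getD_eq_default _ _ (by simpa using hn)]
      exact (hN n hn).symm
  exact (Set.countable_range _).mono hsub

lemma prefVal_ne_top (x : Cs) (n : ℕ) : prefVal x n ≠ ∞ := by
  refine (lt_of_le_of_lt ?_ (lt_of_le_of_lt (gval_le_one x) (by norm_num))).ne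
  rw [gval_split x n]; exact le_self_add

lemma prefVal_congr {x y : Cs} {n : ℕ} (h : ∀ j < n, x j = y j) : prefVal x n = prefVal y n := by
  apply Finset.sum_congr rfl
  intro i hi
  rw [h i (Finset.mem_range.mp hi)]

lemma prefVal_succ_true {x : Cs} {n : ℕ} (h : x n = true) :
    prefVal x (n + 1) = prefVal x n + (2 : ℝ≥0∞)⁻¹ ^ (n + 1) := by
  rw [prefVal, prefVal, Finset.sum_range_succ, h]; simp

lemma prefVal_succ_false {x : Cs} {n : ℕ} (h : x n = false) :
    prefVal x (n + 1) = prefVal x n := by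
  rw [prefVal, prefVal, Finset.sum_range_succ, h]; simp

/-- the key rigidity lemma for equal gvals -/
lemma gval_eq_forces {x y : Cs} {n : ℕ} (h : gval x = gval y)
    (agree : ∀ j < n, x j = y j) (hx : x n = true) (hy : y n = false) :
    (∀ k, x (k + (n + 1)) = false) ∧ (∀ k, y (k + (n + 1)) = true) := by
  have hgx := gval_split x (n + 1)
  have hgy := gval_split y (n + 1)
  rw [prefVal_succ_true hx] at hgx
  rw [prefVal_succ_false hy] at hgy
  rw [prefVal_congr agree] at hgx
  rw [hgx, hgy, add_assoc] at h
  have h2 : (2 : ℝ≥0∞)⁻¹ ^ (n + 1) + tailVal x (n + 1) = tailVal y (n + 1) :=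
    (ENNReal.add_right_inj (prefVal_ne_top y n)).mp h
  have h3 : tailVal y (n + 1) ≤ (2 : ℝ≥0∞)⁻¹ ^ (n + 1) := tailVal_le y (n + 1)
  have h4 : tailVal x (n + 1) = 0 := by
    by_contra h4
    have : (2 : ℝ≥0∞)⁻¹ ^ (n + 1) < (2 : ℝ≥0∞)⁻¹ ^ (n + 1) + tailVal x (n + 1) :=
      ENNReal.lt_add_right (half_pow_ne_top _) h4
    rw [h2] at this
    exact absurd (this.trans_le h3) (lt_irrefl _)
  rw [h4, add_zero] at h2
  exact ⟨(tailVal_eq_zero_iff x (n + 1)).mp h4, (tailVal_eq_max_iff y (n + 1)).mp h2.symm⟩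

lemma gval_injOn : InjOn gval EvCᶜ := by
  intro x hx y hy h
  by_contra hne
  have hne' : ∃ j, x j ≠ y j := by
    by_contra hc
    push_neg at hc
    exact hne (funext hc)
  classical
  let n := Nat.find hne'
  have hd : x n ≠ y n := Nat.find_spec hne'
  have agree : ∀ j < n, x j = y j := fun j hj => by
    have := Nat.find_min hne' hj
    simpa using this
  cases hxn : x n
  · cases hyn : y n
    · rw [hxn, hyn] at hd; exact hd rfl
    · have := gval_eq_forces h.symm (fun j hj => (agree j hj).symm) hyn hxn
      refine hy ⟨n + 1, fun m hm => ?_⟩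
      have h1 : y m = false := by
        have h0 := this.1 (m - (n + 1)); rwa [Nat.sub_add_cancel hm] at h0
      have h2 : y (n + 1) = false := by simpa using this.1 0
      rw [h1, h2]
  · cases hyn : y n
    · have := gval_eq_forces h agree hxn hyn
      refine hx ⟨n + 1, fun m hm => ?_⟩
      have h1 : x m = false := by
        have h0 := this.1 (m - (n + 1)); rwa [Nat.sub_add_cancel hm] at h0
      have h2 : x (n + 1) = false := by simpa using this.1 0
      rw [h1, h2]
    · rw [hxn, hyn] at hd; exact hd rfl

/-! ### greedy binary expansion -/

def gq (t : ℝ≥0∞) : ℕ → ℝ≥0∞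
  | 0 => 0
  | n + 1 => gq t n + if gq t n + (2 : ℝ≥0∞)⁻¹ ^ (n + 1) ≤ t then (2 : ℝ≥0∞)⁻¹ ^ (n + 1) else 0

def gy (t : ℝ≥0∞) : Cs := fun n => decide (gq t n + (2 : ℝ≥0∞)⁻¹ ^ (n + 1) ≤ t)

lemma gq_eq_prefVal (t : ℝ≥0∞) (n : ℕ) : gq t n = prefVal (gy t) n := by
  induction n with
  | zero => simp [gq, prefVal]
  | succ n ih =>
    rw [prefVal, Finset.sum_range_succ, ← prefVal, ← ih]
    show gq t (n + 1) = gq t n + _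
    rw [gq]
    congr 1
    by_cases h : gq t n + (2 : ℝ≥0∞)⁻¹ ^ (n + 1) ≤ t
    · simp [gy, h]
    · simp [gy, h]

lemma gq_invariant {t : ℝ≥0∞} (h1 : t ≤ 1) (n : ℕ) :
    gq t n ≤ t ∧ t ≤ gq t n + (2 : ℝ≥0∞)⁻¹ ^ n := by
  induction n with
  | zero => simpa [gq] using h1
  | succ n ih =>
    by_cases h : gq t n + (2 : ℝ≥0∞)⁻¹ ^ (n + 1) ≤ t
    · constructor
      · rw [gq, if_pos h]; exact h
      · rw [gq, if_pos h, add_assoc, half_add_half]; exact ih.2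
    · constructor
      · rw [gq, if_neg h, add_zero]; exact ih.1
      · rw [gq, if_neg h, add_zero]
        push_neg at h
        exact h.le

lemma gval_eq_iSup_prefVal (x : Cs) : gval x = ⨆ n, prefVal x n :=
  ENNReal.tsum_eq_iSup_nat

lemma gval_gy {t : ℝ≥0∞} (h1 : t ≤ 1) : gval (gy t) = t := by
  rw [gval_eq_iSup_prefVal]
  have hub : ∀ n, prefVal (gy t) n ≤ t := fun n => (gq_eq_prefVal t n) ▸ (gq_invariant h1 n).1
  refine le_antisymm (iSup_le hub) ?_
  by_contra hc
  push_neg at hc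
  set s := ⨆ n, prefVal (gy t) n with hs
  have hst : s ≤ t := iSup_le hub
  have hsne : s ≠ ∞ := (hst.trans_lt (h1.trans_lt (by norm_num))).ne
  have hpos : t - s ≠ 0 := by
    rw [ne_eq, tsub_eq_zero_iff_le]
    exact fun h => absurd (h.trans_lt hc) (lt_irrefl _)
  obtain ⟨n, hn⟩ := ENNReal.exists_inv_two_pow_lt hpos
  have h2 : t ≤ s + (2 : ℝ≥0∞)⁻¹ ^ n := by
    calc t ≤ gq t n + (2 : ℝ≥0∞)⁻¹ ^ n := (gq_invariant h1 n).2
    _ ≤ s + (2 : ℝ≥0∞)⁻¹ ^ n := by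
        gcongr
        rw [gq_eq_prefVal]
        exact le_iSup (fun n => prefVal (gy t) n) n
  have h3 : s + (2 : ℝ≥0∞)⁻¹ ^ n < s + (t - s) :=
    ENNReal.add_lt_add_left hsne hn
  rw [add_tsub_cancel_of_le hst] at h3
  exact absurd (h2.trans_lt h3) (lt_irrefl _)

lemma exists_gval_eq {t : ℝ≥0∞} (h1 : t ≤ 1) : ∃ y : Cs, gval y = t := ⟨gy t, gval_gy h1⟩

/-! ### distribution of gval under the fair coin measure -/

lemma measure_gval_lt (hγ : IsFairCoin γ) (y : Cs) :
    γ {x | gval x < gval y} = gval y := by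
  classical
  set S := {x | gval x < gval y} with hS
  set T' : ℕ → Set Cs := fun n => if y n = true then cyl (pre y n ++ [false]) else ∅ with hT'
  -- members of T' n
  have memT' : ∀ n x, x ∈ T' n ↔ y n = true ∧ (∀ i < n, x i = y i) ∧ x n = false := by
    intro n x
    rw [hT']
    by_cases hyn : y n = true
    · constructor
      · intro h
        have h' := mem_cyl_concat.mp (by simpa only [hyn, if_true] using h)
        exact ⟨hyn, mem_cyl_pre.mp h'.1, by simpa using h'.2⟩
      · rintro ⟨-, h1, h2⟩
        simp only [hyn, if_true]
        exact mem_cyl_concat.mpr ⟨mem_cyl_pre.mpr h1, by simpa using h2⟩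
    · simp [hyn]
  -- S ⊆ ⋃ T'
  have hsub : S ⊆ ⋃ n, T' n := by
    intro x hx
    have hne : ∃ j, x j ≠ y j := by
      by_contra hc
      push_neg at hc
      rw [hS, mem_setOf_eq, funext hc] at hx
      exact lt_irrefl _ hx
    set n := Nat.find hne with hn
    have hd : x n ≠ y n := Nat.find_spec hne
    have agree : ∀ j < n, x j = y j := fun j hj => by simpa using Nat.find_min hne hj
    have hP := prefVal_congr agree
    cases hxn : x n
    · cases hyn : y n
      · rw [hxn, hyn] at hd; exact absurd rfl hd
      · exact mem_iUnion.mpr ⟨n, (memT' n x).mpr ⟨hyn, agree, hxn⟩⟩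
    · cases hyn : y n
      · exfalso
        have hx' : gval x < gval y := hx
        have hgy : gval y = prefVal y n + tailVal y (n + 1) := by
          rw [gval_split y (n + 1), prefVal_succ_false hyn]
        have hgx : gval x = prefVal x n + ((2 : ℝ≥0∞)⁻¹ ^ (n + 1) + tailVal x (n + 1)) := by
          rw [gval_split x (n + 1), prefVal_succ_true hxn, add_assoc]
        have : gval y ≤ gval x := by
          rw [hgx, hgy, hP]
          gcongr
          exact (tailVal_le y (n + 1)).trans le_self_add
        exact absurd (hx'.trans_le this) (lt_irrefl _)
      · rw [hxn, hyn] at hd; exact absurd rfl hd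
  -- T' n \ S ⊆ EvC
  have hdiff : ∀ n, T' n \ S ⊆ EvC := by
    intro n x ⟨hxT, hxS⟩
    obtain ⟨hyn, agree, hxn⟩ := (memT' n x).mp hxT
    have hge : gval y ≤ gval x := not_lt.mp hxS
    have hgx : gval x = prefVal y n + tailVal x (n + 1) := by
      rw [gval_split x (n + 1), prefVal_succ_false hxn, prefVal_congr agree]
    have hgy : gval y = prefVal y n + ((2 : ℝ≥0∞)⁻¹ ^ (n + 1) + tailVal y (n + 1)) := by
      rw [gval_split y (n + 1), prefVal_succ_true hyn, add_assoc]
    have hmax : tailVal x (n + 1) = (2 : ℝ≥0∞)⁻¹ ^ (n + 1) := by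
      have hle : (2 : ℝ≥0∞)⁻¹ ^ (n + 1) + tailVal y (n + 1) ≤ tailVal x (n + 1) := by
        have := hgy ▸ hge
        rw [hgx] at this
        exact (ENNReal.add_le_add_iff_left (prefVal_ne_top y n)).mp this
      refine le_antisymm (tailVal_le x (n + 1)) ?_
      exact le_self_add.trans hle
    have hall := (tailVal_eq_max_iff x (n + 1)).mp hmax
    refine ⟨n + 1, fun m hm => ?_⟩
    have h1 : x m = true := by
      have h0 := hall (m - (n + 1)); rwa [Nat.sub_add_cancel hm] at h0
    have h2 : x (n + 1) = true := by simpa using hall 0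
    rw [h1, h2]
  -- disjointness
  have hdisj : Pairwise (Function.onFun Disjoint T') := by
    intro m n hmn
    wlog hlt : m < n generalizing m n
    · exact (this hmn.symm (by omega)).symm
    rw [Function.onFun, Set.disjoint_left]
    intro x hxm hxn
    obtain ⟨hym, -, hxm'⟩ := (memT' m x).mp hxm
    obtain ⟨-, hagree, -⟩ := (memT' n x).mp hxn
    rw [hagree m hlt, hym] at hxm'
    exact Bool.noConfusion hxm'
  have hmeas : ∀ n, MeasurableSet (T' n) := by
    intro n
    by_cases hyn : y n = true
    · simp only [hT', hyn, if_true]; exact measurableSet_cyl _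
    · simp only [hT', hyn, if_false]; exact MeasurableSet.empty
  -- measure of the union
  have hTmeas : γ (⋃ n, T' n) = gval y := by
    rw [measure_iUnion hdisj hmeas, gval]
    congr 1
    funext n
    by_cases hyn : y n = true
    · simp only [hT', hyn, if_true]
      rw [measure_cyl hγ]
      simp
    · have hyn' : y n = false := by simpa using hyn
      simp [hT', hyn']
  -- conclude
  have hSle : γ S ≤ γ (⋃ n, T' n) := measure_mono hsub
  have hTle : γ (⋃ n, T' n) ≤ γ S := by
    have : (⋃ n, T' n) ⊆ S ∪ EvC := by
      intro x hx
      by_cases hxS : x ∈ S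
      · exact Or.inl hxS
      · obtain ⟨n, hn⟩ := mem_iUnion.mp hx
        exact Or.inr (hdiff n ⟨hn, hxS⟩)
    calc γ (⋃ n, T' n) ≤ γ (S ∪ EvC) := measure_mono this
      _ ≤ γ S + γ EvC := measure_union_le _ _
      _ = γ S := by rw [countable_null hγ EvC_countable, add_zero]
  rw [← hTmeas]
  exact le_antisymm hSle hTle

/-! ### fibers of gval and distribution function -/

lemma fiber_countable (t : ℝ≥0∞) : {x : Cs | gval x = t}.Countable := by
  have : {x : Cs | gval x = t} ⊆ EvC ∪ ({x : Cs | gval x = t} ∩ EvCᶜ) := by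
    intro x hx
    by_cases h : x ∈ EvC
    · exact Or.inl h
    · exact Or.inr ⟨hx, h⟩
  refine (Set.Countable.union EvC_countable ?_).mono this
  refine Set.Subsingleton.countable ?_
  rintro x ⟨hx, hx'⟩ z ⟨hz, hz'⟩
  exact gval_injOn hx' hz' (hx.trans hz.symm)

lemma measure_gval_lt' (hγ : IsFairCoin γ) {t : ℝ≥0∞} (h1 : t ≤ 1) :
    γ {x | gval x < t} = t := by
  obtain ⟨y, rfl⟩ := exists_gval_eq h1
  exact measure_gval_lt hγ y

lemma measure_gval_le (hγ : IsFairCoin γ) {t : ℝ≥0∞} (h1 : t ≤ 1) :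
    γ {x | gval x ≤ t} = t := by
  have hsub : {x : Cs | gval x ≤ t} ⊆ {x | gval x < t} ∪ {x | gval x = t} := by
    intro x hx
    have hx' : gval x ≤ t := hx
    rcases hx'.lt_or_eq with h | h
    · exact Or.inl h
    · exact Or.inr h
  refine le_antisymm ?_ ?_
  · calc γ {x | gval x ≤ t} ≤ γ ({x | gval x < t} ∪ {x | gval x = t}) := measure_mono hsub
      _ ≤ γ {x | gval x < t} + γ {x | gval x = t} := measure_union_le _ _
      _ = t := by rw [countable_null hγ (fiber_countable t), add_zero, measure_gval_lt' hγ h1]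
  · have h2 : {x : Cs | gval x < t} ⊆ {x | gval x ≤ t} := fun x hx =>
      (le_of_lt (hx : gval x < t) : gval x ≤ t)
    calc t = γ {x | gval x < t} := (measure_gval_lt' hγ h1).symm
      _ ≤ γ {x | gval x ≤ t} := measure_mono h2

/-! ### the interval system of a measure -/

def aval (μ : Measure Cs) (w : List Bool) : ℝ≥0∞ :=
  ∑ i ∈ Finset.range w.length, if w.getD i false then μ (cyl (w.take i ++ [false])) else 0

def bval (μ : Measure Cs) (w : List Bool) : ℝ≥0∞ := aval μ w + μ (cyl w)

variable {μ : Measure Cs}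

@[simp] lemma aval_nil : aval μ [] = 0 := by simp [aval]

lemma bval_nil : bval μ [] = μ univ := by simp [bval, cyl_nil]

lemma measure_cyl_split (μ : Measure Cs) (w : List Bool) :
    μ (cyl w) = μ (cyl (w ++ [false])) + μ (cyl (w ++ [true])) := by
  rw [cyl_split w]
  exact measure_union (cyl_concat_disjoint w) (measurableSet_cyl _)

lemma aval_concat_common (w : List Bool) (b : Bool) :
    aval μ (w ++ [b]) =
      aval μ w + (if b then μ (cyl (w ++ [false])) else 0) := by
  rw [aval, List.length_append, List.length_singleton, Finset.sum_range_succ]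
  congr 1
  · refine Finset.sum_congr rfl fun i hi => ?_
    have hi' := Finset.mem_range.mp hi
    rw [List.getD_append _ _ _ _ hi', List.take_append_of_le_length hi'.le]
  · rw [List.getD_eq_getElem?_getD, List.getElem?_concat_length, Option.getD_some,
      List.take_left]

lemma aval_concat_false (w : List Bool) : aval μ (w ++ [false]) = aval μ w := by
  rw [aval_concat_common]; simp

lemma aval_concat_true (w : List Bool) :
    aval μ (w ++ [true]) = aval μ w + μ (cyl (w ++ [false])) := by
  rw [aval_concat_common]; simp

lemma bval_concat_false (w : List Bool) : bval μ (w ++ [false]) = aval μ (w ++ [true]) := by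
  rw [bval, aval_concat_false, aval_concat_true]

lemma bval_concat_true (w : List Bool) : bval μ (w ++ [true]) = bval μ w := by
  rw [bval, aval_concat_true, bval, add_assoc, ← measure_cyl_split]

lemma aval_le_aval_concat (w : List Bool) (b : Bool) : aval μ w ≤ aval μ (w ++ [b]) := by
  rw [aval_concat_common]; exact le_self_add

lemma bval_concat_le (w : List Bool) (b : Bool) : bval μ (w ++ [b]) ≤ bval μ w := by
  cases b
  · rw [bval_concat_false, aval_concat_true, bval]
    exact add_le_add le_rfl (measure_mono (cyl_concat_subset w false))
  · rw [bval_concat_true]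

lemma aval_le_bval (w : List Bool) : aval μ w ≤ bval μ w := le_self_add

lemma bval_le_one [IsProbabilityMeasure μ] (w : List Bool) : bval μ w ≤ 1 := by
  induction w using List.reverseRecOn with
  | nil => rw [bval_nil, measure_univ]
  | append_singleton v b ih => exact (bval_concat_le v b).trans ih

lemma aval_le_one [IsProbabilityMeasure μ] (w : List Bool) : aval μ w ≤ 1 :=
  (aval_le_bval w).trans (bval_le_one w)

lemma aval_ne_top [IsProbabilityMeasure μ] (w : List Bool) : aval μ w ≠ ∞ :=
  ((aval_le_one w).trans_lt (by norm_num)).ne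

/-! ### the digit machine -/

def wrd (μ : Measure Cs) (t : ℝ≥0∞) : ℕ → List Bool
  | 0 => []
  | n + 1 => wrd μ t n ++ [decide (aval μ (wrd μ t n ++ [true]) < t)]

@[simp] lemma wrd_length (t : ℝ≥0∞) (n : ℕ) : (wrd μ t n).length = n := by
  induction n with
  | zero => rfl
  | succ n ih => rw [wrd]; simp [ih]

lemma wrd_invariant [IsProbabilityMeasure μ] {t : ℝ≥0∞} (h0 : 0 < t) (h1 : t ≤ 1) (n : ℕ) :
    aval μ (wrd μ t n) < t ∧ t ≤ bval μ (wrd μ t n) := by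
  induction n with
  | zero =>
    refine ⟨by simpa [wrd] using h0, ?_⟩
    show t ≤ bval μ []
    rw [bval_nil, measure_univ]
    exact h1
  | succ n ih =>
    rw [wrd]
    by_cases h : aval μ (wrd μ t n ++ [true]) < t
    · rw [decide_eq_true h]
      exact ⟨h, by rw [bval_concat_true]; exact ih.2⟩
    · rw [decide_eq_false h]
      refine ⟨by rw [aval_concat_false]; exact ih.1, ?_⟩
      rw [bval_concat_false]
      exact not_lt.mp h

lemma wrd_unique {t : ℝ≥0∞} (w : List Bool)
    (ha : aval μ w < t) (hb : t ≤ bval μ w) : wrd μ t w.length = w := by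
  induction w using List.reverseRecOn with
  | nil => rfl
  | append_singleton v b ih =>
    have hav : aval μ v < t := (aval_le_aval_concat v b).trans_lt ha
    have hbv : t ≤ bval μ v := hb.trans (bval_concat_le v b)
    have hv := ih hav hbv
    rw [List.length_append, List.length_singleton, wrd, hv]
    congr 1
    cases b
    · rw [bval_concat_false] at hb
      simp [decide_eq_false (not_lt.mpr hb)]
    · simp [decide_eq_true ha]

/-! ### the exceptional set and the realizer -/

def Dset (μ : Measure Cs) : Set ℝ≥0∞ := Set.range (aval μ) ∪ Set.range (bval μ)

def Eset (μ : Measure Cs) : Set Cs := gval ⁻¹' (Dset μ) ∪ EvC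

def FF (μ : Measure Cs) : Cs → Cs := fun x n => (wrd μ (gval x) (n + 1)).getD n false

lemma Dset_countable (μ : Measure Cs) : (Dset μ).Countable :=
  (Set.countable_range _).union (Set.countable_range _)

lemma Eset_countable (μ : Measure Cs) : (Eset μ).Countable := by
  refine Set.Countable.union ?_ EvC_countable
  have hsub : gval ⁻¹' (Dset μ) ⊆ ⋃ t ∈ Dset μ, {x : Cs | gval x = t} := by
    intro x hx
    exact mem_biUnion hx rfl
  exact ((Dset_countable μ).biUnion fun t _ => fiber_countable t).mono hsub

lemma gval_pos_of_not_mem {x : Cs} (hx : x ∉ Eset μ) : 0 < gval x := by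
  rcases eq_zero_or_pos (gval x) with h | h
  · exfalso
    apply hx
    left
    show gval x ∈ Dset μ
    rw [h]
    exact Or.inl ⟨[], (aval_nil (μ := μ)).symm⟩
  · exact h

lemma gval_ne_aval {x : Cs} (hx : x ∉ Eset μ) (w : List Bool) : gval x ≠ aval μ w :=
  fun h => hx (Or.inl (Or.inl ⟨w, h.symm⟩))

lemma gval_ne_bval {x : Cs} (hx : x ∉ Eset μ) (w : List Bool) : gval x ≠ bval μ w :=
  fun h => hx (Or.inl (Or.inr ⟨w, h.symm⟩))

lemma wrd_take (t : ℝ≥0∞) {n m : ℕ} (h : n ≤ m) : (wrd μ t m).take n = wrd μ t n := by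
  induction m with
  | zero =>
    have : n = 0 := Nat.le_zero.mp h
    subst this; rfl
  | succ m ih =>
    by_cases hnm : n = m + 1
    · subst hnm
      have h1 := List.take_length (l := wrd μ t (m + 1))
      rwa [wrd_length] at h1
    · have hn : n ≤ m := by omega
      rw [wrd, List.take_append_of_le_length (by rw [wrd_length]; exact hn), ih hn]

lemma wrd_getD (t : ℝ≥0∞) {i n : ℕ} (h : i < n) :
    (wrd μ t n).getD i false = (wrd μ t (i + 1)).getD i false := by
  rw [← wrd_take t (show i + 1 ≤ n from h)]
  rw [List.getD_eq_getElem?_getD, List.getD_eq_getElem?_getD, List.getElem?_take,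
    if_pos (Nat.lt_succ_self i)]

lemma FF_mem_cyl {x : Cs} {w : List Bool} :
    FF μ x ∈ cyl w ↔ wrd μ (gval x) w.length = w := by
  constructor
  · intro h
    refine List.ext_getElem (by simp) fun i h1 h2 => ?_
    have hi : i < w.length := by simpa using h1
    have e1 : (wrd μ (gval x) (i + 1)).getD i false = w.getD i false := h i hi
    calc (wrd μ (gval x) w.length)[i]
        = (wrd μ (gval x) w.length).getD i false := (List.getD_eq_getElem _ _ h1).symm
      _ = (wrd μ (gval x) (i + 1)).getD i false := wrd_getD (μ := μ) (gval x) hi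
      _ = w.getD i false := e1
      _ = w[i] := List.getD_eq_getElem _ _ h2
  · intro h i hi
    show (wrd μ (gval x) (i + 1)).getD i false = w.getD i false
    rw [← wrd_getD (μ := μ) (gval x) hi, h]

lemma wrd_iff_Ioc [IsProbabilityMeasure μ] {x : Cs} (hx : x ∉ Eset μ) (w : List Bool) :
    wrd μ (gval x) w.length = w ↔ gval x ∈ Set.Ioc (aval μ w) (bval μ w) := by
  have h0 : 0 < gval x := gval_pos_of_not_mem hx
  have h1 : gval x ≤ 1 := gval_le_one x
  constructor
  · intro h
    have hinv := wrd_invariant (μ := μ) h0 h1 w.length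
    rw [h] at hinv
    exact ⟨hinv.1, hinv.2⟩
  · rintro ⟨ha, hb⟩
    exact wrd_unique w ha hb

/-! ### continuity of the realizer off the exceptional set -/

lemma isOpen_cyl (w : List Bool) : IsOpen (cyl w) := by
  have : cyl w = ⋂ i ∈ Finset.range w.length, (fun x : Cs => x i) ⁻¹' {w.getD i false} := by
    ext x; simp [cyl]
  rw [this]
  exact isOpen_biInter_finset fun i _ =>
    (continuous_apply i).isOpen_preimage _ (isOpen_discrete _)

lemma prefVal_mono (x : Cs) {n m : ℕ} (h : n ≤ m) : prefVal x n ≤ prefVal x m :=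
  Finset.sum_le_sum_of_subset (Finset.range_subset_range.mpr h)

lemma FF_continuousOn [IsProbabilityMeasure μ] : ContinuousOn (FF μ) (Eset μ)ᶜ := by
  rw [continuousOn_pi]
  intro n x hx
  have hx' : x ∉ Eset μ := hx
  have h0 : 0 < gval x := gval_pos_of_not_mem hx'
  have h1 : gval x ≤ 1 := gval_le_one x
  set w := wrd μ (gval x) (n + 1) with hw
  have hinv := wrd_invariant (μ := μ) h0 h1 (n + 1)
  have hblt : gval x < bval μ w := lt_of_le_of_ne hinv.2 (gval_ne_bval hx' w)
  -- choose n₁ with aval w < prefVal x n₁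
  have hsup : aval μ w < ⨆ m, prefVal x m := by
    rw [← gval_eq_iSup_prefVal]; exact hinv.1
  obtain ⟨n₁, hn₁⟩ := lt_iSup_iff.mp hsup
  -- choose n₂ with gval x + 2⁻¹ ^ n₂ < bval w
  have hpos : bval μ w - gval x ≠ 0 := by
    rw [ne_eq, tsub_eq_zero_iff_le]
    exact fun h => absurd (h.trans_lt hblt) (lt_irrefl _)
  obtain ⟨n₂, hn₂⟩ := ENNReal.exists_inv_two_pow_lt hpos
  have hadd : gval x + (2 : ℝ≥0∞)⁻¹ ^ n₂ < bval μ w := by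
    rw [add_comm]
    exact lt_tsub_iff_right.mp hn₂
  set N := max n₁ n₂ with hN
  have hconst : ∀ y ∈ cyl (pre x N), FF μ y n = FF μ x n := by
    intro y hy
    have hagree : ∀ i < N, y i = x i := mem_cyl_pre.mp hy
    have hy1 : aval μ w < gval y := by
      calc aval μ w < prefVal x n₁ := hn₁
        _ ≤ prefVal x N := prefVal_mono x (le_max_left _ _)
        _ = prefVal y N := (prefVal_congr hagree).symm
        _ ≤ gval y := by rw [gval_split y N]; exact le_self_add
    have hy2 : gval y < bval μ w := by
      calc gval y = prefVal y N + tailVal y N := gval_split y N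
        _ ≤ prefVal x N + (2 : ℝ≥0∞)⁻¹ ^ N := by
            rw [prefVal_congr hagree]
            exact add_le_add le_rfl (tailVal_le y N)
        _ ≤ gval x + (2 : ℝ≥0∞)⁻¹ ^ n₂ := by
            refine add_le_add ?_ (pow_le_pow_of_le_one zero_le (by norm_num)
              (le_max_right _ _))
            rw [gval_split x N]; exact le_self_add
        _ < bval μ w := hadd
    have huniq : wrd μ (gval y) (n + 1) = w := by
      have := wrd_unique (μ := μ) (t := gval y) w
        (by rw [hw] at hy1 ⊢; exact hy1) (by rw [hw] at hy2 ⊢; exact hy2.le)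
      rwa [hw, wrd_length] at this
    show (wrd μ (gval y) (n + 1)).getD n false = (wrd μ (gval x) (n + 1)).getD n false
    rw [huniq]
  refine ContinuousAt.continuousWithinAt ?_
  refine Filter.EventuallyEq.continuousAt (y := FF μ x n) ?_
  refine Filter.eventually_of_mem ((isOpen_cyl (pre x N)).mem_nhds ?_) hconst
  exact mem_cyl_pre.mpr fun i _ => rfl

/-! ### the main cylinder computation -/

lemma measure_FF_cyl (hγ : IsFairCoin γ) [IsProbabilityMeasure μ] (w : List Bool) :
    γ ((Eset μ)ᶜ ∩ FF μ ⁻¹' cyl w) = μ (cyl w) := by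
  have hset : (Eset μ)ᶜ ∩ FF μ ⁻¹' cyl w
      = (Eset μ)ᶜ ∩ gval ⁻¹' Set.Ioc (aval μ w) (bval μ w) := by
    ext x
    simp only [mem_inter_iff, mem_compl_iff, mem_preimage]
    refine and_congr_right fun hx => ?_
    rw [FF_mem_cyl, wrd_iff_Ioc hx]
  rw [hset]
  have hE : γ (Eset μ) = 0 := countable_null hγ (Eset_countable μ)
  have hdrop : γ ((Eset μ)ᶜ ∩ gval ⁻¹' Set.Ioc (aval μ w) (bval μ w))
      = γ (gval ⁻¹' Set.Ioc (aval μ w) (bval μ w)) := by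
    refine le_antisymm (measure_mono inter_subset_right) ?_
    calc γ (gval ⁻¹' Set.Ioc (aval μ w) (bval μ w))
        ≤ γ (((Eset μ)ᶜ ∩ gval ⁻¹' Set.Ioc (aval μ w) (bval μ w)) ∪ Eset μ) := by
          refine measure_mono fun x hxm => ?_
          by_cases hxe : x ∈ Eset μ
          · exact Or.inr hxe
          · exact Or.inl ⟨hxe, hxm⟩
      _ ≤ γ ((Eset μ)ᶜ ∩ gval ⁻¹' Set.Ioc (aval μ w) (bval μ w)) + γ (Eset μ) :=
          measure_union_le _ _
      _ = γ ((Eset μ)ᶜ ∩ gval ⁻¹' Set.Ioc (aval μ w) (bval μ w)) := by rw [hE, add_zero]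
  rw [hdrop]
  have hIoc : gval ⁻¹' Set.Ioc (aval μ w) (bval μ w)
      = {x : Cs | gval x ≤ bval μ w} \ {x : Cs | gval x ≤ aval μ w} := by
    ext x
    simp only [mem_preimage, Set.mem_Ioc, mem_diff, mem_setOf_eq, not_le]
    exact and_comm
  rw [hIoc]
  have hma : MeasurableSet {x : Cs | gval x ≤ aval μ w} :=
    gval_measurable measurableSet_Iic
  have hfin : γ {x : Cs | gval x ≤ aval μ w} ≠ ∞ := by
    haveI := hγ.1
    exact (measure_lt_top γ _).ne
  have hsub : {x : Cs | gval x ≤ aval μ w} ⊆ {x : Cs | gval x ≤ bval μ w} :=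
    fun x hxm => le_trans hxm (aval_le_bval w)
  rw [measure_diff hsub hma.nullMeasurableSet hfin,
    measure_gval_le hγ (bval_le_one w), measure_gval_le hγ (aval_le_one w),
    bval, ENNReal.add_sub_cancel_left (aval_ne_top w)]

/-! ### generators -/

lemma generateFrom_cyl :
    (inferInstance : MeasurableSpace Cs) = MeasurableSpace.generateFrom (Set.range cyl) := by
  refine le_antisymm ?_ (MeasurableSpace.generateFrom_le ?_)
  · show MeasurableSpace.pi ≤ _
    refine iSup_le fun i => ?_
    intro s hs
    obtain ⟨s', -, rfl⟩ := hs
    have hsingle : ∀ b : Bool,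
        MeasurableSet[MeasurableSpace.generateFrom (Set.range cyl)]
          ((fun x : Cs => x i) ⁻¹' {b}) := by
      intro b
      have hset : (fun x : Cs => x i) ⁻¹' {b}
          = ⋃ v : Fin i → Bool,
              cyl (pre (fun n => if h : n < i then v ⟨n, h⟩ else false) i ++ [b]) := by
        ext x
        simp only [mem_preimage, mem_singleton_iff, mem_iUnion]
        constructor
        · intro hxb
          refine ⟨fun j => x j, ?_⟩
          rw [mem_cyl_concat]
          constructor
          · exact mem_cyl_pre.mpr fun j hj => by simp [hj]
          · rwa [pre_length]
        · rintro ⟨v, hv⟩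
          have h2 := (mem_cyl_concat.mp hv).2
          rwa [pre_length] at h2
      rw [hset]
      exact MeasurableSet.iUnion fun v =>
        MeasurableSpace.measurableSet_generateFrom ⟨_, rfl⟩
    have hdec : (fun x : Cs => x i) ⁻¹' s' = ⋃ b ∈ s', (fun x : Cs => x i) ⁻¹' {b} := by
      ext x; simp
    rw [hdec]
    exact MeasurableSet.biUnion s'.to_countable fun b _ => hsingle b
  · rintro s ⟨w, rfl⟩
    exact measurableSet_cyl w

lemma isPiSystem_cyl : IsPiSystem (Set.range cyl) := by
  rintro s ⟨w, rfl⟩ t ⟨v, rfl⟩ hne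
  wlog h : w.length ≤ v.length generalizing w v
  · rw [Set.inter_comm]
    exact this v w (by rwa [Set.inter_comm]) (le_of_not_ge h)
  obtain ⟨x, hxw, hxv⟩ := hne
  have hsub : cyl v ⊆ cyl w := by
    intro y hy i hi
    have hi' : i < v.length := lt_of_lt_of_le hi h
    rw [hy i hi', ← hxv i hi', hxw i hi]
  rw [Set.inter_eq_self_of_subset_right hsub]
  exact ⟨v, rfl⟩

/-! ### assembly -/

theorem main (γ : Measure Cs) (hγ : IsFairCoin γ) (μ : Measure Cs) [IsProbabilityMeasure μ] :
    ∃ (E : Set Cs) (F : Cs → Cs),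
      E.Countable ∧ ContinuousOn F Eᶜ ∧
        ∀ B : Set Cs, MeasurableSet B → μ B = γ (Eᶜ ∩ F ⁻¹' B) := by
  haveI := hγ.1
  refine ⟨Eset μ, FF μ, Eset_countable μ, FF_continuousOn, ?_⟩
  have hEm : MeasurableSet (Eset μ) := (Eset_countable μ).measurableSet
  have hFae : AEMeasurable (FF μ) (γ.restrict (Eset μ)ᶜ) :=
    FF_continuousOn.aemeasurable hEm.compl
  set ν := Measure.map (FF μ) (γ.restrict (Eset μ)ᶜ) with hν
  have happ : ∀ B : Set Cs, MeasurableSet B → ν B = γ ((Eset μ)ᶜ ∩ FF μ ⁻¹' B) := by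
    intro B hB
    rw [hν, Measure.map_apply_of_aemeasurable hFae hB,
      Measure.restrict_apply' hEm.compl, Set.inter_comm]
  have hext : μ = ν := by
    refine ext_of_generate_finite (Set.range cyl) generateFrom_cyl isPiSystem_cyl ?_ ?_
    · rintro s ⟨w, rfl⟩
      rw [happ (cyl w) (measurableSet_cyl w), measure_FF_cyl hγ w]
    · rw [happ univ MeasurableSet.univ, measure_univ, Set.preimage_univ, Set.inter_univ,
        measure_compl hEm (measure_ne_top γ _), countable_null hγ (Eset_countable μ),
        measure_univ, tsub_zero]
  intro B hB
  calc μ B = ν B := by rw [hext]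
    _ = γ ((Eset μ)ᶜ ∩ FF μ ⁻¹' B) := happ B hB

end

end FairCoinAux


/-- Every Borel probability measure `μ̃` on Cantor space admits a realizer over the fair
coin measure `γ` which is continuous outside a countable set `E`: for every Borel set `B`,
`μ̃ B = γ (Eᶜ ∩ F ⁻¹' B)`. -/
theorem stmt0 (γ : Measure (ℕ → Bool)) (hγ : IsFairCoin γ)
    (μ : Measure (ℕ → Bool)) [IsProbabilityMeasure μ] :
    ∃ (E : Set (ℕ → Bool)) (F : (ℕ → Bool) → (ℕ → Bool)),
      E.Countable ∧ ContinuousOn F Eᶜ ∧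
        ∀ B : Set (ℕ → Bool), MeasurableSet B → μ B = γ (Eᶜ ∩ F ⁻¹' B) :=
  FairCoinAux.main γ hγ μ
end

section
/- Let μ be a Borel probability measure on Cantor space 𝒞 = ℕ → Bool and suppose there is a finite word v (a list of Booleans) such that the μ-measure of the cylinder set v∘𝒞 of all sequences extending v is not a dyadic rational, i.e., not of the form k/2^n for natural numbers k, n. Then there is no total continuous function F : 𝒞 → 𝒞 such that the pushforward of the fair coin measure γ under F equals μ. -/
/-!
The preimage of the clopen cylinder `cylinder v` under a continuous `F` is clopen. By compactness
a clopen subset of Cantor space is determined by the first `N` coordinates for some `N`, so it is a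
finite union of the `2 ^ N` cylinders of length `N`, each of fair-coin measure `2⁻ᴺ`. Hence
`μ (cylinder v) = γ (F ⁻¹' cylinder v)` would be dyadic.
-/

open MeasureTheory Set

/-- The cylinder set of all infinite binary sequences extending the finite word `v`. -/
def cylinder (v : List Bool) : Set (ℕ → Bool) :=
  {x : ℕ → Bool | ∀ i : Fin v.length, x (i : ℕ) = v.get i}

lemma cylinder_eq_iInter_preimage (v : List Bool) :
    _root_.cylinder v = ⋂ i : Fin v.length, (fun x : ℕ → Bool => x i) ⁻¹' {v.get i} := by
  ext x
  simp [_root_.cylinder]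

lemma isClopen_cylinder (v : List Bool) : IsClopen (_root_.cylinder v) := by
  rw [cylinder_eq_iInter_preimage]
  exact isClopen_iInter_of_finite fun i => (isClopen_discrete _).preimage (continuous_apply _)

namespace PiNat

variable {E : ℕ → Type*} [∀ n, TopologicalSpace (E n)] [∀ n, DiscreteTopology (E n)]

theorem exists_forall_cylinder_subset {K : Set (∀ n, E n)} (hKc : IsCompact K) (hKo : IsOpen K) :
    ∃ N, ∀ x ∈ K, cylinder x N ⊆ K := by
  let U : ℕ → Set (∀ n, E n) := fun n => {x | cylinder x n ⊆ K}
  have hUo : ∀ n, IsOpen (U n) := fun n => isOpen_iff_forall_mem_open.2 fun x hx =>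
    ⟨cylinder x n, fun y hy => show cylinder y n ⊆ K from mem_cylinder_iff_eq.1 hy ▸ hx,
      isOpen_cylinder E x n, self_mem_cylinder x n⟩
  have hKU : K ⊆ ⋃ n, U n := fun x hx => by
    obtain ⟨_, ⟨y, n, rfl⟩, hxy, hyK⟩ :=
      (isTopologicalBasis_cylinders E).exists_subset_of_mem_open hx hKo
    exact mem_iUnion.2 ⟨n, show cylinder x n ⊆ K from (mem_cylinder_iff_eq.1 hxy).symm ▸ hyK⟩
  have hU_mono : Monotone U := fun m n hmn x hx => (cylinder_anti x hmn).trans hx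
  exact hKc.elim_directed_cover U hUo hKU hU_mono.directed_le

end PiNat

def truncate {α : Type*} (n : ℕ) (x : ℕ → α) : Fin n → α := fun i => x i

lemma truncate_eq_truncate_iff {α : Type*} {n : ℕ} {x y : ℕ → α} :
    truncate n x = truncate n y ↔ y ∈ PiNat.cylinder x n := by
  simp [truncate, funext_iff, PiNat.mem_cylinder_iff, Fin.forall_iff, eq_comm]

lemma preimage_truncate_image_eq {α : Type*} {n : ℕ} {K : Set (ℕ → α)}
    (hK : ∀ x ∈ K, PiNat.cylinder x n ⊆ K) : truncate n ⁻¹' (truncate n '' K) = K := by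
  refine (subset_preimage_image _ _).antisymm' ?_
  rintro y ⟨x, hx, hxy⟩
  exact hK x hx (truncate_eq_truncate_iff.1 hxy)

lemma measurable_truncate {α : Type*} [MeasurableSpace α] (n : ℕ) :
    Measurable (truncate (α := α) n) :=
  measurable_pi_lambda _ fun i => measurable_pi_apply (i : ℕ)

lemma IsFairCoin.measure_preimage_truncate {γ : Measure (ℕ → Bool)} (hγ : IsFairCoin γ) {n : ℕ}
    (A : Finset (Fin n → Bool)) : γ (truncate n ⁻¹' A) = A.card * (1 / 2 : ENNReal) ^ n := by
  have hfiber : ∀ w, truncate n ⁻¹' {w} = {x : ℕ → Bool | ∀ i : Fin n, x i = w i} := fun w => by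
    ext x
    simp [truncate, funext_iff]
  rw [← sum_measure_preimage_singleton A fun w _ => measurable_truncate n (measurableSet_singleton w)]
  simp [hfiber, hγ.2]

lemma IsFairCoin.exists_measure_eq_of_isClopen {γ : Measure (ℕ → Bool)} (hγ : IsFairCoin γ)
    {K : Set (ℕ → Bool)} (hK : IsClopen K) : ∃ k n : ℕ, γ K = (k : ENNReal) / 2 ^ n := by
  obtain ⟨N, hN⟩ := PiNat.exists_forall_cylinder_subset hK.isClosed.isCompact hK.isOpen
  have hfin : (truncate N '' K).Finite := toFinite _
  refine ⟨hfin.toFinset.card, N, ?_⟩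
  calc γ K = γ (truncate N ⁻¹' hfin.toFinset) := by
        rw [hfin.coe_toFinset, preimage_truncate_image_eq hN]
    _ = hfin.toFinset.card * (1 / 2 : ENNReal) ^ N := hγ.measure_preimage_truncate _
    _ = hfin.toFinset.card / 2 ^ N := by rw [one_div, ← ENNReal.inv_pow, div_eq_mul_inv]

theorem stmt1_general (γ μ : Measure (ℕ → Bool)) (hγ : IsFairCoin γ)
    (v : List Bool) (hv : ¬ ∃ k n : ℕ, μ (cylinder v) = (k : ENNReal) / 2 ^ n) :
    ¬ ∃ F : (ℕ → Bool) → (ℕ → Bool), Continuous F ∧ γ.map F = μ := by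
  rintro ⟨F, hF, rfl⟩
  rw [Measure.map_apply hF.measurable (isClopen_cylinder v).isClosed.measurableSet] at hv
  exact hv (hγ.exists_measure_eq_of_isClopen ((isClopen_cylinder v).preimage hF))

/-- If some cylinder set has non-dyadic measure under a Borel probability measure `μ` on
Cantor space, then no total continuous function pushes the fair coin measure `γ`
forward to `μ`. -/
theorem stmt1 (γ μ : Measure (ℕ → Bool)) (hγ : IsFairCoin γ) [IsProbabilityMeasure μ]
    (v : List Bool) (hv : ¬ ∃ k n : ℕ, μ (cylinder v) = (k : ENNReal) / 2 ^ n) :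
    ¬ ∃ F : (ℕ → Bool) → (ℕ → Bool), Continuous F ∧ γ.map F = μ :=
  stmt1_general γ μ hγ v hv
end
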